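/- arXiv:1009.3201 — 2 statements merged into one kernel-verified Lean document; each statement's English description precedes it below -/
import Mathlib

section
/- For any coprime positive integers a and c, one has s(a - c, 2a) = -s(c,a) - s(c,a;1/2,1/2), obtained by splitting the summation over μ mod 2a into even and odd residues. -/
open Finset Real

open Classical in
/-- The sawtooth function: 0 on integers, fractional part minus 1/2 otherwise. -/
noncomputable def saw (x : ℝ) : ℝ :=
  if ∃ n : ℤ, x = n then 0 else Int.fract x - 1/2

/-- The Dedekind sum s(q,p). -/
noncomputable def dedekindSum (q : ℤ) (p : ℕ) : ℝ :=
  ∑ μ ∈ Finset.range p, saw ((μ : ℝ) / p) * saw ((q : ℝ) * μ / p)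

/-- The Dedekind–Rademacher sum s(q,p;x,y). -/
noncomputable def drSum (q : ℤ) (p : ℕ) (x y : ℝ) : ℝ :=
  ∑ μ ∈ Finset.range p, saw (((μ : ℝ) + y) / p) * saw ((q : ℝ) * ((μ : ℝ) + y) / p + x)

/-!
Split `μ ∈ [0, 2a)` into `μ = 2ν` and `μ = 2ν + 1` with `ν ∈ [0, a)`. Since
`(a - c)μ / 2a = μ/2 - cμ/2a`, the second sawtooth of each term is, up to an integer shift, the
negative of `((cν/a))` for even `μ` and of `((c(ν + 1/2)/a + 1/2))` for odd `μ`; as `((·))` is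
odd and 1-periodic, the even terms give `-s(c,a)` and the odd ones `-s(c,a;1/2,1/2)`.
-/

lemma saw_intCast_add (n : ℤ) (x : ℝ) : saw ((n : ℝ) + x) = saw x := by
  unfold saw
  by_cases hx : ∃ m : ℤ, x = m
  · obtain ⟨m, rfl⟩ := hx
    rw [if_pos ⟨n + m, by push_cast; ring⟩, if_pos ⟨m, rfl⟩]
  · have hnx : ¬ ∃ m : ℤ, (n : ℝ) + x = m := by
      rintro ⟨m, hm⟩
      exact hx ⟨m - n, by push_cast; linarith⟩
    rw [if_neg hnx, if_neg hx, Int.fract_intCast_add]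

lemma saw_neg (x : ℝ) : saw (-x) = -saw x := by
  unfold saw
  by_cases hx : ∃ n : ℤ, x = n
  · obtain ⟨n, rfl⟩ := hx
    rw [if_pos ⟨-n, by push_cast; ring⟩, if_pos ⟨n, rfl⟩, neg_zero]
  · have hnx : ¬ ∃ n : ℤ, -x = n := by
      rintro ⟨n, hn⟩
      exact hx ⟨-n, by push_cast; linarith⟩
    have hfract : Int.fract x ≠ 0 := fun h0 ↦
      hx ⟨⌊x⌋, by linarith [Int.floor_add_fract x]⟩
    rw [if_neg hnx, if_neg hx, Int.fract_neg hfract]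
    ring

lemma Finset.sum_range_two_mul {M : Type*} [AddCommMonoid M] (f : ℕ → M) (n : ℕ) :
    ∑ μ ∈ range (2 * n), f μ = ∑ ν ∈ range n, (f (2 * ν) + f (2 * ν + 1)) := by
  induction n with
  | zero => simp
  | succ n ih =>
    rw [Nat.mul_succ, sum_range_succ, sum_range_succ, ih, sum_range_succ, add_assoc]

section
variable (q : ℤ) {p : ℕ} (hp : p ≠ 0) (ν : ℕ)
include hp

lemma saw_mul_saw_even :
    saw (((2 * ν : ℕ) : ℝ) / ((2 * p : ℕ) : ℝ))
        * saw ((((p : ℤ) - q : ℤ) : ℝ) * ((2 * ν : ℕ) : ℝ) / ((2 * p : ℕ) : ℝ))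
      = -(saw ((ν : ℝ) / p) * saw ((q : ℝ) * ν / p)) := by
  have hp' : (p : ℝ) ≠ 0 := Nat.cast_ne_zero.mpr hp
  have hfirst : ((2 * ν : ℕ) : ℝ) / ((2 * p : ℕ) : ℝ) = (ν : ℝ) / p := by
    push_cast
    field_simp
  have hsecond : (((p : ℤ) - q : ℤ) : ℝ) * ((2 * ν : ℕ) : ℝ) / ((2 * p : ℕ) : ℝ)
      = ((ν : ℤ) : ℝ) + -((q : ℝ) * ν / p) := by
    push_cast
    field_simp
    ring
  rw [hfirst, hsecond, saw_intCast_add, saw_neg, mul_neg]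

lemma saw_mul_saw_odd :
    saw (((2 * ν + 1 : ℕ) : ℝ) / ((2 * p : ℕ) : ℝ))
        * saw ((((p : ℤ) - q : ℤ) : ℝ) * ((2 * ν + 1 : ℕ) : ℝ) / ((2 * p : ℕ) : ℝ))
      = -(saw (((ν : ℝ) + 1/2) / p) * saw ((q : ℝ) * ((ν : ℝ) + 1/2) / p + 1/2)) := by
  have hp' : (p : ℝ) ≠ 0 := Nat.cast_ne_zero.mpr hp
  have hfirst : ((2 * ν + 1 : ℕ) : ℝ) / ((2 * p : ℕ) : ℝ) = ((ν : ℝ) + 1/2) / p := by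
    push_cast
    field_simp
  have hsecond : (((p : ℤ) - q : ℤ) : ℝ) * ((2 * ν + 1 : ℕ) : ℝ) / ((2 * p : ℕ) : ℝ)
      = (((ν : ℤ) + 1 : ℤ) : ℝ) + -((q : ℝ) * ((ν : ℝ) + 1/2) / p + 1/2) := by
    push_cast
    field_simp
    ring
  rw [hfirst, hsecond, saw_intCast_add, saw_neg, mul_neg]

end

theorem dedekindSum_sub_two_mul (q : ℤ) {p : ℕ} (hp : p ≠ 0) :
    dedekindSum ((p : ℤ) - q) (2 * p) = -dedekindSum q p - drSum q p (1/2) (1/2) := by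
  unfold dedekindSum drSum
  rw [sum_range_two_mul, neg_sub_left, ← sum_add_distrib, ← sum_neg_distrib]
  refine sum_congr rfl fun ν _ ↦ ?_
  rw [saw_mul_saw_even q hp, saw_mul_saw_odd q hp, neg_add_rev]

theorem dedekind_sum_even_odd_split_general (a c : ℕ) (ha : 0 < a) :
    dedekindSum ((a : ℤ) - c) (2 * a)
      = -dedekindSum (c : ℤ) a - drSum (c : ℤ) a (1/2) (1/2) :=
  dedekindSum_sub_two_mul c ha.ne'

theorem dedekind_sum_even_odd_split (a c : ℕ) (ha : 0 < a) (hc : 0 < c)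
    (hcop : Nat.Coprime a c) :
    dedekindSum ((a : ℤ) - c) (2 * a)
      = -dedekindSum (c : ℤ) a - drSum (c : ℤ) a (1/2) (1/2) :=
  dedekind_sum_even_odd_split_general a c ha
end

section
/- Let a_1,...,a_n be pairwise coprime positive integers and b_1,...,b_n integers with Σ_i b_i·(a_1···a_n)/a_i = 1. Then for each i, the Dedekind–Rademacher sums satisfy s(b_i, a_i; 1/2, 0) = s(a_1···a_n/a_i, a_i; 1/2, 1/2), where all a_i are assumed odd; the identity follows from the substitution ν = b_i·μ + (a_i - 1)/2 mod a_i. -/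
open Finset Real

/-!
Write `p = 2m + 1`. Since `q P ≡ 1 (mod p)`, the map `μ ↦ ν = q μ + m` permutes the residues
mod `p`, and it matches the summands termwise: `(ν + 1/2)/p` differs from `q μ/p + 1/2` by an
integer, and so does `P (ν + 1/2)/p + 1/2` from `μ/p`, because `q P ≡ 1 (mod p)` and `P` is odd.
The congruence `b_i ∏_{j ≠ i} a_j ≡ 1 (mod a_i)` is read off from the Bézout relation, all of
whose other terms are multiples of `a_i`.
-/

open Classical in
lemma saw_add_intCast (x : ℝ) (k : ℤ) : saw (x + k) = saw x := by
  have hint : (∃ n : ℤ, x + k = n) ↔ ∃ n : ℤ, x = n :=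
    ⟨fun ⟨n, hn⟩ => ⟨n - k, by push_cast; linarith⟩,
     fun ⟨n, hn⟩ => ⟨n + k, by push_cast; linarith⟩⟩
  simp only [saw, Int.fract_add_intCast, if_congr hint rfl rfl]

lemma saw_eq_of_eq_add_intCast {x y : ℝ} (k : ℤ) (h : x = y + k) : saw x = saw y := by
  rw [h, saw_add_intCast]

lemma Finset.sum_range_eq_sum_zmod_val {M : Type*} [AddCommMonoid M] (p : ℕ) [NeZero p]
    (f : ℕ → M) : ∑ μ ∈ range p, f μ = ∑ x : ZMod p, f x.val := by
  refine sum_nbij' (fun μ => (μ : ZMod p)) ZMod.val (fun _ _ => mem_univ _)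
    (fun x _ => mem_range.mpr (ZMod.val_lt x)) (fun μ hμ => ?_) (fun x _ => ZMod.natCast_zmod_val x)
    (fun μ hμ => ?_) <;> rw [ZMod.val_cast_of_lt (mem_range.mp hμ)]

lemma mul_prod_erase_modEq_one {ι : Type*} [Fintype ι] [DecidableEq ι] (a b : ι → ℤ)
    (h : ∑ i, b i * ∏ j ∈ univ.erase i, a j = 1) (i : ι) :
    b i * ∏ j ∈ univ.erase i, a j ≡ 1 [ZMOD a i] := by
  rw [← h, ← add_sum_erase _ _ (mem_univ i)]
  refine Int.modEq_iff_dvd.mpr ?_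
  rw [add_sub_cancel_left]
  refine dvd_sum fun j hj => ?_
  exact (dvd_prod_of_mem _ (mem_erase.mpr ⟨(ne_of_mem_erase hj).symm, mem_univ i⟩)).mul_left _

section Substitution

variable {p : ℕ} {m q μ ν : ℤ}

lemma saw_div_add_half_of_modEq (hm : (p : ℤ) = 2 * m + 1) (hν : ν ≡ q * μ + m [ZMOD p]) :
    saw ((ν + 1/2) / p) = saw (q * μ / p + 1/2) := by
  obtain ⟨k, hk⟩ := Int.modEq_iff_dvd.mp hν.symm
  have hp : (p : ℝ) = 2 * m + 1 := by exact_mod_cast hm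
  have hp0 : (p : ℝ) ≠ 0 := Nat.cast_ne_zero.mpr (by omega)
  have hk' : (ν : ℝ) = q * μ + m + p * k := by exact_mod_cast eq_add_of_sub_eq' hk
  refine saw_eq_of_eq_add_intCast k ?_
  rw [hk']
  field_simp
  linear_combination -hp

lemma saw_mul_div_add_half_of_modEq {P : ℤ} (hm : (p : ℤ) = 2 * m + 1) (hP : Odd P)
    (hqP : q * P ≡ 1 [ZMOD p]) (hν : ν ≡ q * μ + m [ZMOD p]) :
    saw (P * (ν + 1/2) / p + 1/2) = saw (μ / p) := by
  obtain ⟨k, hk⟩ := Int.modEq_iff_dvd.mp hν.symm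
  obtain ⟨l, hl⟩ := Int.modEq_iff_dvd.mp hqP.symm
  obtain ⟨c, rfl⟩ := hP
  have hp : (p : ℝ) = 2 * m + 1 := by exact_mod_cast hm
  have hp0 : (p : ℝ) ≠ 0 := Nat.cast_ne_zero.mpr (by omega)
  have hk' : (ν : ℝ) = q * μ + m + p * k := by exact_mod_cast eq_add_of_sub_eq' hk
  have hl' : (q : ℝ) * (2 * c + 1) = 1 + p * l := by exact_mod_cast eq_add_of_sub_eq' hl
  refine saw_eq_of_eq_add_intCast (l * μ + (2 * c + 1) * k + c + 1) ?_
  rw [hk']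
  push_cast
  field_simp
  linear_combination (2 * (μ : ℝ)) * hl' - (1 + 2 * c) * hp

end Substitution

theorem drSum_half_zero_eq_drSum_half_half {p : ℕ} (hp : Odd p) {q P : ℤ} (hP : Odd P)
    (hqP : q * P ≡ 1 [ZMOD p]) : drSum q p (1/2) 0 = drSum P p (1/2) (1/2) := by
  obtain ⟨m, hm⟩ := hp
  have hm' : (p : ℤ) = 2 * (m : ℤ) + 1 := by exact_mod_cast hm
  have : NeZero p := ⟨by omega⟩
  have hunit : IsUnit (q : ZMod p) :=
    IsUnit.of_mul_eq_one (P : ZMod p) (by exact_mod_cast (ZMod.intCast_eq_intCast_iff _ _ p).mpr hqP)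
  let σ : ZMod p → ZMod p := fun x => q * x + m
  have hσ : σ.Bijective := Finite.injective_iff_bijective.mp fun x y hxy =>
    hunit.mul_left_cancel (add_right_cancel hxy)
  unfold drSum
  rw [sum_range_eq_sum_zmod_val, sum_range_eq_sum_zmod_val]
  refine Fintype.sum_bijective σ hσ _ _ fun x => ?_
  have hval : ((σ x).val : ℤ) ≡ q * x.val + m [ZMOD p] :=
    (ZMod.intCast_eq_intCast_iff _ _ p).mp (by push_cast [ZMod.natCast_zmod_val]; rfl)
  have h1 := saw_div_add_half_of_modEq hm' hval
  have h2 := saw_mul_div_add_half_of_modEq hm' hP hqP hval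
  push_cast at h1 h2
  rw [add_zero, h1, h2]
  ring

theorem dr_sum_substitution_general (n : ℕ) (a : Fin n → ℕ) (b : Fin n → ℤ)
    (hodd : ∀ i, Odd (a i))
    (hsum : ∑ i, b i * ∏ j ∈ Finset.univ.erase i, (a j : ℤ) = 1) :
    ∀ i, drSum (b i) (a i) (1/2) 0
      = drSum (∏ j ∈ Finset.univ.erase i, (a j : ℤ)) (a i) (1/2) (1/2) := fun i =>
  drSum_half_zero_eq_drSum_half_half (hodd i)
    (prod_induction _ Odd (fun _ _ => Odd.mul) odd_one fun j _ => (hodd j).natCast)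
    (mul_prod_erase_modEq_one _ b hsum i)

theorem dr_sum_substitution (n : ℕ) (a : Fin n → ℕ) (b : Fin n → ℤ)
    (hpos : ∀ i, 0 < a i) (hodd : ∀ i, Odd (a i))
    (hcop : ∀ i j, i ≠ j → Nat.Coprime (a i) (a j))
    (hsum : ∑ i, b i * ∏ j ∈ Finset.univ.erase i, (a j : ℤ) = 1) :
    ∀ i, drSum (b i) (a i) (1/2) 0
      = drSum (∏ j ∈ Finset.univ.erase i, (a j : ℤ)) (a i) (1/2) (1/2) :=
  dr_sum_substitution_general n a b hodd hsum
end
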